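/- (Lemma 2.6(2)) Let μ ≥ 0 and assume inf_{u ∈ S(b)} I_{μ,T}(u) < 0 for every b ∈ (0,a]. For 0 < a_1 < a_2 ≤ a one has m_μ(a_1) ≥ (a_1/a_2)·m_μ(a_2), where m_μ(b) = inf { I_μ(u) : u ∈ S(b), [u] < R_0 }. Moreover, if m_μ(a_1) is attained (i.e. there exists u ∈ S(a_1) with [u] < R_0 and I_μ(u) = m_μ(a_1)), then the inequality is strict: m_μ(a_1) > (a_1/a_2)·m_μ(a_2). -/

import Mathlib

open MeasureTheory Filter Set Topology
open scoped ENNReal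

noncomputable section

abbrev EN (N : ℕ) := EuclideanSpace ℝ (Fin N)

/-- squared Gagliardo seminorm `[u]²` (as an extended nonnegative real). -/
def gagSq (N : ℕ) (s : ℝ) (u : EN N → ℝ) : ℝ≥0∞ :=
  ∫⁻ x, ∫⁻ y, ENNReal.ofReal ((u x - u y) ^ 2 / ‖x - y‖ ^ ((N : ℝ) + 2 * s))

/-- squared Gagliardo seminorm `[u]²` as a real number. -/
def gagSqR (N : ℕ) (s : ℝ) (u : EN N → ℝ) : ℝ := (gagSq N s u).toReal

/-- the Gagliardo seminorm `[u]`. -/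
def gagNorm (N : ℕ) (s : ℝ) (u : EN N → ℝ) : ℝ := Real.sqrt (gagSqR N s u)

/-- `‖u‖₂²`. -/
def l2sq (N : ℕ) (u : EN N → ℝ) : ℝ := ∫ x, (u x) ^ 2

/-- membership in the fractional Sobolev space `ℋ = H^s`. -/
def memH (N : ℕ) (s : ℝ) (u : EN N → ℝ) : Prop :=
  MemLp u 2 (volume : Measure (EN N)) ∧ gagSq N s u < ⊤

/-- the sphere `S(c) = {u ∈ ℋ : ‖u‖₂² = c}`. -/
def msphere (N : ℕ) (s c : ℝ) : Set (EN N → ℝ) := {u | memH N s u ∧ l2sq N u = c}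

/-- the nonlocal term `∫∫ |u(x)|^t |u(y)|^t / |x-y|^{N-α}`; `Q = nlterm N α q`, `P = nlterm N α p`. -/
def nlterm (N : ℕ) (α t : ℝ) (u : EN N → ℝ) : ℝ :=
  (∫⁻ x, ∫⁻ y, ENNReal.ofReal (|u x| ^ t * |u y| ^ t / ‖x - y‖ ^ ((N : ℝ) - α))).toReal

/-- `‖u‖_ℋ² = [u]² + ‖u‖₂²`. -/
def hNormSq (N : ℕ) (s : ℝ) (u : EN N → ℝ) : ℝ := gagSqR N s u + l2sq N u

/-- `γ_t = (Nt − N − α)/(2ts)`. -/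
def gam (N : ℕ) (s α t : ℝ) : ℝ := ((N : ℝ) * t - N - α) / (2 * t * s)

/-- the functional `I_μ`. -/
def Ifun (N : ℕ) (s α q p μ : ℝ) (u : EN N → ℝ) : ℝ :=
  gagSqR N s u / 2 + μ / 2 * l2sq N u - nlterm N α q u / (2 * q) - nlterm N α p u / (2 * p)

/-- the truncated functional `I_{μ,T}`. -/
def ITfun (N : ℕ) (s α q p μ : ℝ) (τ : ℝ → ℝ) (u : EN N → ℝ) : ℝ :=
  gagSqR N s u / 2 + μ / 2 * l2sq N u - nlterm N α q u / (2 * q)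
    - τ (gagNorm N s u) * nlterm N α p u / (2 * p)

/-- the functional `J_ε`. -/
def Jfun (N : ℕ) (s α q p : ℝ) (V : EN N → ℝ) (ε : ℝ) (u : EN N → ℝ) : ℝ :=
  gagSqR N s u / 2 + (∫ x, V (ε • x) * (u x) ^ 2) / 2 - nlterm N α q u / (2 * q)
    - nlterm N α p u / (2 * p)

/-- the truncated functional `J_{ε,T}`. -/
def JTfun (N : ℕ) (s α q p : ℝ) (V : EN N → ℝ) (ε : ℝ) (τ : ℝ → ℝ) (u : EN N → ℝ) : ℝ :=
  gagSqR N s u / 2 + (∫ x, V (ε • x) * (u x) ^ 2) / 2 - nlterm N α q u / (2 * q)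
    - τ (gagNorm N s u) * nlterm N α p u / (2 * p)

/-- the inner product of `ℋ`. -/
def Hinner (N : ℕ) (s : ℝ) (u v : EN N → ℝ) : ℝ :=
  (∫ x, ∫ y, (u x - u y) * (v x - v y) / ‖x - y‖ ^ ((N : ℝ) + 2 * s)) + ∫ x, u x * v x

-- basic lintegral scaling
lemma lint_smul (N : ℕ) (f : EN N → ℝ≥0∞) {R : ℝ} (hR : 0 < R) :
    ∫⁻ x, f (R • x) = ENNReal.ofReal (R ^ (-(N : ℝ))) * ∫⁻ x, f x := by
  have hR0 : R ≠ 0 := hR.ne'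
  have h1 : ∫⁻ y, f y ∂(Measure.map (R • ·) (volume : Measure (EN N))) = ∫⁻ x, f (R • x) :=
    lintegral_map_equiv f (Homeomorph.smul (isUnit_iff_ne_zero.2 hR0).unit).toMeasurableEquiv
  rw [Measure.map_addHaar_smul volume hR0, lintegral_smul_measure] at h1
  rw [← h1, finrank_euclideanSpace_fin]
  congr 2
  rw [abs_of_pos (by positivity), ← Real.rpow_natCast R N, ← Real.rpow_neg hR.le]

lemma double_smul (N : ℕ) (F : EN N → EN N → ℝ) (c : ℝ) {R : ℝ} (hR : 0 < R) :
    ∫⁻ x, ∫⁻ y, ENNReal.ofReal (F (R • x) (R • y) / ‖x - y‖ ^ c)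
      = ENNReal.ofReal (R ^ (c - 2 * N)) *
        ∫⁻ x, ∫⁻ y, ENNReal.ofReal (F x y / ‖x - y‖ ^ c) := by
  have hRc : (0:ℝ) < R ^ c := Real.rpow_pos_of_pos hR c
  have hre : ∀ x y : EN N, F (R • x) (R • y) / ‖x - y‖ ^ c
      = R ^ c * (F (R • x) (R • y) / ‖R • x - R • y‖ ^ c) := by
    intro x y
    have hn : ‖R • x - R • y‖ ^ c = R ^ c * ‖x - y‖ ^ c := by
      rw [← smul_sub, norm_smul, Real.norm_eq_abs, abs_of_pos hR,
        Real.mul_rpow hR.le (norm_nonneg _)]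
    rw [hn, mul_div_assoc']
    rw [mul_div_mul_left _ _ hRc.ne']
  simp only [hre, ENNReal.ofReal_mul hRc.le]
  have inner1 : ∀ x : EN N, ∫⁻ y, ENNReal.ofReal (R ^ c) *
      ENNReal.ofReal (F (R • x) (R • y) / ‖R • x - R • y‖ ^ c)
      = ENNReal.ofReal (R ^ c) *
        ∫⁻ y, ENNReal.ofReal (F (R • x) (R • y) / ‖R • x - R • y‖ ^ c) :=
    fun x => lintegral_const_mul' _ _ ENNReal.ofReal_ne_top
  simp only [inner1]
  rw [lintegral_const_mul' _ _ ENNReal.ofReal_ne_top]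
  have inner2 : ∀ x : EN N, ∫⁻ y, ENNReal.ofReal (F (R • x) (R • y) / ‖R • x - R • y‖ ^ c)
      = ENNReal.ofReal (R ^ (-(N : ℝ))) *
        ∫⁻ y, ENNReal.ofReal (F (R • x) y / ‖R • x - y‖ ^ c) :=
    fun x => lint_smul N (fun y => ENNReal.ofReal (F (R • x) y / ‖R • x - y‖ ^ c)) hR
  simp only [inner2]
  rw [lintegral_const_mul' _ _ ENNReal.ofReal_ne_top,
    lint_smul N (fun x => ∫⁻ y, ENNReal.ofReal (F x y / ‖x - y‖ ^ c)) hR,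
    ← mul_assoc, ← mul_assoc, ← ENNReal.ofReal_mul hRc.le,
    ← ENNReal.ofReal_mul (by positivity), ← Real.rpow_add hR, ← Real.rpow_add hR,
    show c + -(N : ℝ) + -(N : ℝ) = c - 2 * N by ring]

lemma gagSq_smul (N : ℕ) (s : ℝ) (u : EN N → ℝ) {R : ℝ} (hR : 0 < R) :
    gagSq N s (fun x => u (R • x)) = ENNReal.ofReal (R ^ (2 * s - N)) * gagSq N s u := by
  have h := double_smul N (fun a b => (u a - u b) ^ 2) ((N : ℝ) + 2 * s) hR
  rw [show (N : ℝ) + 2 * s - 2 * N = 2 * s - N by ring] at h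
  exact h

lemma gagSqR_smul (N : ℕ) (s : ℝ) (u : EN N → ℝ) {R : ℝ} (hR : 0 < R) :
    gagSqR N s (fun x => u (R • x)) = R ^ (2 * s - N) * gagSqR N s u := by
  rw [gagSqR, gagSq_smul N s u hR, ENNReal.toReal_mul,
    ENNReal.toReal_ofReal (Real.rpow_nonneg hR.le _)]
  rfl

lemma nl_smul (N : ℕ) (α t : ℝ) (u : EN N → ℝ) {R : ℝ} (hR : 0 < R) :
    nlterm N α t (fun x => u (R • x)) = R ^ (-(N : ℝ) - α) * nlterm N α t u := by
  have h := double_smul N (fun a b => |u a| ^ t * |u b| ^ t) ((N : ℝ) - α) hR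
  rw [show (N : ℝ) - α - 2 * N = -(N : ℝ) - α by ring] at h
  rw [nlterm, h, ENNReal.toReal_mul, ENNReal.toReal_ofReal (Real.rpow_nonneg hR.le _)]
  rfl

lemma l2sq_smul (N : ℕ) (u : EN N → ℝ) {R : ℝ} (hR : 0 < R) :
    l2sq N (fun x => u (R • x)) = R ^ (-(N : ℝ)) * l2sq N u := by
  have h := MeasureTheory.Measure.integral_comp_smul (volume : Measure (EN N))
    (fun x => (u x) ^ 2) R
  rw [finrank_euclideanSpace_fin] at h
  rw [l2sq, l2sq]
  rw [show (∫ x : EN N, u (R • x) ^ 2) = ∫ x : EN N, (fun y => (u y) ^ 2) (R • x) from rfl, h,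
    smul_eq_mul, abs_of_pos (by positivity), ← Real.rpow_natCast R N, ← Real.rpow_neg hR.le]

lemma memlp_smul (N : ℕ) (u : EN N → ℝ) {R : ℝ} (hR : 0 < R)
    (hu : MemLp u 2 (volume : Measure (EN N))) :
    MemLp (fun x => u (R • x)) 2 (volume : Measure (EN N)) := by
  have hR0 : R ≠ 0 := hR.ne'
  set e : EN N ≃ᵐ EN N := (Homeomorph.smul (isUnit_iff_ne_zero.2 hR0).unit).toMeasurableEquiv
  have hmap : Measure.map (R • ·) (volume : Measure (EN N))
      = ENNReal.ofReal |(R ^ Module.finrank ℝ (EN N))⁻¹| • volume :=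
    Measure.map_addHaar_smul volume hR0
  have h1 : MemLp u 2 (Measure.map (R • ·) (volume : Measure (EN N))) := by
    rw [hmap]; exact hu.smul_measure ENNReal.ofReal_ne_top
  have h2 : MemLp u 2 (Measure.map e (volume : Measure (EN N))) := h1
  exact (MeasurableEquiv.memLp_map_measure_iff e).1 h2


lemma scale_up (N : ℕ) (s α q p μ : ℝ) (hNr : 0 < (N : ℝ)) (hs : 0 < s) (hα : 0 < α)
    (hq : 0 < q) (hp : 0 < p)
    (u : EN N → ℝ) (b : ℝ) (hu : u ∈ msphere N s b) (ρ : ℝ) (hρ : 1 ≤ ρ) :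
    ∃ v, v ∈ msphere N s (ρ * b) ∧
      gagNorm N s v = ρ ^ (((N : ℝ) - 2 * s) / (2 * N)) * gagNorm N s u ∧
      Ifun N s α q p μ v ≤ ρ * Ifun N s α q p μ u
        - ρ * (ρ ^ (α / (N : ℝ)) - 1) *
          (nlterm N α q u / (2 * q) + nlterm N α p u / (2 * p)) := by
  have hρ0 : (0 : ℝ) < ρ := lt_of_lt_of_le one_pos hρ
  set R : ℝ := ρ ^ (-(1 : ℝ) / N) with hRdef
  have hRpos : 0 < R := Real.rpow_pos_of_pos hρ0 _
  have hR1 : R ≤ 1 := Real.rpow_le_one_of_one_le_of_nonpos hρ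
    (le_of_lt (div_neg_of_neg_of_pos (by norm_num) hNr))
  have hRN : R ^ (-(N : ℝ)) = ρ := by
    rw [hRdef, ← Real.rpow_mul hρ0.le]
    rw [show -(1 : ℝ) / N * (-(N : ℝ)) = N / N by ring, div_self hNr.ne', Real.rpow_one]
  have hRa : R ^ (-α) = ρ ^ (α / (N : ℝ)) := by
    rw [hRdef, ← Real.rpow_mul hρ0.le]
    congr 1
    field_simp
  have hkin : R ^ (2 * s - (N : ℝ)) ≤ ρ := by
    rw [show 2 * s - (N : ℝ) = 2 * s + -(N : ℝ) by ring, Real.rpow_add hRpos, hRN]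
    nth_rewrite 2 [← one_mul ρ]
    exact mul_le_mul_of_nonneg_right
      (Real.rpow_le_one hRpos.le hR1 (by positivity)) hρ0.le
  have hnlR : R ^ (-(N : ℝ) - α) = ρ * ρ ^ (α / (N : ℝ)) := by
    rw [show -(N : ℝ) - α = -(N : ℝ) + -α by ring, Real.rpow_add hRpos, hRN, hRa]
  refine ⟨fun x => u (R • x), ⟨⟨memlp_smul N u hRpos hu.1.1, ?_⟩, ?_⟩, ?_, ?_⟩
  · rw [gagSq_smul N s u hRpos]
    exact ENNReal.mul_lt_top ENNReal.ofReal_lt_top hu.1.2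
  · rw [l2sq_smul N u hRpos, hRN, hu.2]
  · rw [gagNorm, gagSqR_smul N s u hRpos, Real.sqrt_mul (Real.rpow_nonneg hRpos.le _)]
    congr 1
    rw [hRdef, ← Real.rpow_mul hρ0.le,
      show -(1 : ℝ) / N * (2 * s - N) = ((N : ℝ) - 2 * s) / N by field_simp; ring,
      Real.sqrt_eq_rpow, ← Real.rpow_mul hρ0.le]
    congr 1
    ring
  · have hG : 0 ≤ gagSqR N s u := ENNReal.toReal_nonneg
    have hQ : 0 ≤ nlterm N α q u := ENNReal.toReal_nonneg
    have hP : 0 ≤ nlterm N α p u := ENNReal.toReal_nonneg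
    rw [Ifun, Ifun, gagSqR_smul N s u hRpos, l2sq_smul N u hRpos, nl_smul N α q u hRpos,
      nl_smul N α p u hRpos, hRN, hnlR, hu.2]
    have hkin' : 0 ≤ (ρ - R ^ (2 * s - (N : ℝ))) * gagSqR N s u :=
      mul_nonneg (sub_nonneg.2 hkin) hG
    have h2q : (0:ℝ) < 2 * q := by positivity
    have h2p : (0:ℝ) < 2 * p := by positivity
    have hQ2 : (0:ℝ) ≤ nlterm N α q u / (2 * q) := by positivity
    have hP2 : (0:ℝ) ≤ nlterm N α p u / (2 * p) := by positivity
    simp only [mul_div_assoc]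
    nlinarith [hkin', hQ2, hP2]

set_option maxHeartbeats 2000000 in
/-- Lemma 2.6(2): `m_μ(a₁) ≥ (a₁/a₂) m_μ(a₂)` for `0 < a₁ < a₂ ≤ a`,
with strict inequality if `m_μ(a₁)` is attained. -/
theorem stmt12
    (N : ℕ) (s α q p a Cq Cp : ℝ)
    (hs0 : 0 < s) (hs1 : s < 1) (hN : 2 * s < (N : ℝ))
    (hα0 : 0 < α) (hαN : α < (N : ℝ))
    (hq1 : ((N : ℝ) + α) / N < q) (hq2 : q < ((N : ℝ) + 2 * s + α) / N)
    (hp1 : ((N : ℝ) + 2 * s + α) / N < p) (hp2 : p ≤ ((N : ℝ) + α) / ((N : ℝ) - 2 * s))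
    (ha : 0 < a) (hCq : 0 < Cq) (hCp : 0 < Cp)
    (hGNq : ∀ u, memH N s u → nlterm N α q u ≤
      Cq * gagNorm N s u ^ (2 * q * gam N s α q) *
        Real.sqrt (l2sq N u) ^ (2 * q * (1 - gam N s α q)))
    (hGNp : ∀ u, memH N s u → nlterm N α p u ≤
      Cp * gagNorm N s u ^ (2 * p * gam N s α p) *
        Real.sqrt (l2sq N u) ^ (2 * p * (1 - gam N s α p)))
    (K E : ℝ)
    (hK : K = (p * gam N s α p - q * gam N s α q) / (1 - q * gam N s α q) *
      ((1 - q * gam N s α q) / (p * gam N s α p - 1)) ^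
        ((p * gam N s α p - 1) / (p * gam N s α p - q * gam N s α q)) *
      (Cq / q) ^ ((p * gam N s α p - 1) / (p * gam N s α p - q * gam N s α q)) *
      (Cp / p) ^ ((1 - q * gam N s α q) / (p * gam N s α p - q * gam N s α q)))
    (hE : E = (q * (1 - gam N s α q) * (p * gam N s α p - 1) +
      p * (1 - gam N s α p) * (1 - q * gam N s α q)) / (p * gam N s α p - q * gam N s α q))
    (h14 : K * a ^ E < 1)
    (w : ℝ → ℝ)
    (hw : ∀ r : ℝ, w r = 1 - Cq / q * a ^ (q * (1 - gam N s α q)) * r ^ (2 * q * gam N s α q - 2)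
      - Cp / p * a ^ (p * (1 - gam N s α p)) * r ^ (2 * p * gam N s α p - 2))
    (R0 R1 : ℝ) (hR0 : 0 < R0) (hR01 : R0 < R1) (hwR0 : w R0 = 0) (hwR1 : w R1 = 0)
    (τ : ℝ → ℝ) (hτsm : ContDiff ℝ (⊤ : ℕ∞) τ) (hτanti : AntitoneOn τ (Ici 0))
    (hτ01 : ∀ r : ℝ, 0 ≤ r → τ r ∈ Icc (0 : ℝ) 1)
    (hτone : ∀ r ∈ Icc (0 : ℝ) R0, τ r = 1) (hτzero : ∀ r : ℝ, R1 ≤ r → τ r = 0)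
    (μ : ℝ) (hμ : 0 ≤ μ)
    (hneg : ∀ b ∈ Ioc (0 : ℝ) a, sInf (ITfun N s α q p μ τ '' msphere N s b) < 0)
    (m : ℝ → ℝ)
    (hm : ∀ b : ℝ, m b = sInf (Ifun N s α q p μ '' {u | u ∈ msphere N s b ∧ gagNorm N s u < R0}))
    (a1 a2 : ℝ) (ha1 : 0 < a1) (h12 : a1 < a2) (h2a : a2 ≤ a) :
    a1 / a2 * m a2 ≤ m a1 ∧
    ((∃ u, u ∈ msphere N s a1 ∧ gagNorm N s u < R0 ∧ Ifun N s α q p μ u = m a1) →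
      a1 / a2 * m a2 < m a1) := by
  -- basic positivity facts
  have hNr : (0:ℝ) < N := lt_trans (by positivity) hN
  have hq1' : 1 < q := lt_trans ((one_lt_div hNr).2 (by linarith)) hq1
  have hp1' : 1 < p := lt_trans ((one_lt_div hNr).2 (by linarith)) hp1
  have hq0 : 0 < q := by linarith
  have hp0 : 0 < p := by linarith
  set gq := gam N s α q with hgq
  set gp := gam N s α p with hgp
  have hs0' : (0:ℝ) < 2 * s := by linarith
  have hqgq : q * gq = ((N:ℝ) * q - N - α) / (2 * s) := by
    rw [hgq, gam]; field_simp
  have hpgp : p * gp = ((N:ℝ) * p - N - α) / (2 * s) := by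
    rw [hgp, gam]; field_simp
  have hq1n : (N:ℝ) + α < q * N := (div_lt_iff₀ hNr).1 hq1
  have hp1n : (N:ℝ) + 2 * s + α < p * N := (div_lt_iff₀ hNr).1 hp1
  have hqgq0 : 0 < q * gq := by
    rw [hqgq]; apply div_pos <;> linarith
  have hqgq1 : q * gq < 1 := by
    rw [hqgq, div_lt_one hs0']
    have := (lt_div_iff₀ hNr).1 hq2
    linarith
  have hpgp1 : 1 < p * gp := by
    rw [hpgp, lt_div_iff₀ hs0']
    linarith
  have hNs : (0:ℝ) < (N:ℝ) - 2 * s := by linarith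
  have hpgp0 : 0 < p * gp := lt_trans one_pos hpgp1
  have h2qgq : (0:ℝ) ≤ 2 * q * gq := by rw [mul_assoc]; exact mul_nonneg zero_le_two hqgq0.le
  have h2pgp : (0:ℝ) ≤ 2 * p * gp := by rw [mul_assoc]; exact mul_nonneg zero_le_two hpgp0.le
  have heq0 : 0 < q * (1 - gq) := by
    have h : q * (1 - gq) = q - q * gq := by ring
    rw [h]; linarith
  have hep0 : 0 ≤ p * (1 - gp) := by
    have h : p * (1 - gp) = p - p * gp := by ring
    rw [h]
    have h2 : p * ((N:ℝ) - 2 * s) ≤ (N:ℝ) + α := (le_div_iff₀ hNs).1 hp2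
    have h3 : p * gp ≤ p := by
      rw [hpgp, div_le_iff₀ hs0']; nlinarith
    linarith
  -- A, B, βq, βp
  set A := Cq / q * a ^ (q * (1 - gq)) with hAdef
  set B := Cp / p * a ^ (p * (1 - gp)) with hBdef
  have hA : 0 < A := by
    rw [hAdef]
    have := Real.rpow_pos_of_pos ha (q * (1 - gq))
    positivity
  have hB : 0 < B := by
    rw [hBdef]
    have := Real.rpow_pos_of_pos ha (p * (1 - gp))
    positivity
  set βq := 2 * q * gq - 2 with hβq
  set βp := 2 * p * gp - 2 with hβp
  have hβqneg : βq < 0 := by rw [hβq]; linarith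
  have hR1pos : 0 < R1 := lt_trans hR0 hR01
  -- concavity lemma
  have hexp : ∀ k : ℝ, ConvexOn ℝ (Set.univ : Set ℝ) (fun x : ℝ => Real.exp (k * x)) := by
    intro k
    refine ⟨convex_univ, fun x _ y _ c d hc hd hcd => ?_⟩
    have h := convexOn_exp.2 (Set.mem_univ (k * x)) (Set.mem_univ (k * y)) hc hd hcd
    simp only [smul_eq_mul] at h ⊢
    rw [show k * (c * x + d * y) = c * (k * x) + d * (k * y) by ring]
    exact h
  have hwmid : ∀ r : ℝ, R0 ≤ r → r ≤ R1 → A * r ^ βq + B * r ^ βp ≤ 1 := by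
    intro r hr0 hr1
    have hrpos : 0 < r := lt_of_lt_of_le hR0 hr0
    set F : ℝ → ℝ := fun x => 1 - A * Real.exp (βq * x) - B * Real.exp (βp * x) with hFdef
    have hgconc : ConcaveOn ℝ (Set.univ : Set ℝ) F := by
      refine ⟨convex_univ, fun x _ y _ c d hc hd hcd => ?_⟩
      have h1 := (hexp βq).2 (Set.mem_univ x) (Set.mem_univ y) hc hd hcd
      have h2 := (hexp βp).2 (Set.mem_univ x) (Set.mem_univ y) hc hd hcd
      simp only [smul_eq_mul] at h1 h2 ⊢
      simp only [hFdef]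
      have h1' := mul_le_mul_of_nonneg_left h1 hA.le
      have h2' := mul_le_mul_of_nonneg_left h2 hB.le
      have heq : c * (1 - A * Real.exp (βq * x) - B * Real.exp (βp * x))
          + d * (1 - A * Real.exp (βq * y) - B * Real.exp (βp * y))
          = (c + d) - A * (c * Real.exp (βq * x) + d * Real.exp (βq * y))
            - B * (c * Real.exp (βp * x) + d * Real.exp (βp * y)) := by ring
      rw [hcd] at heq
      linarith [h1', h2', heq.le, heq.ge]
    have hval : ∀ t : ℝ, 0 < t → F (Real.log t) = w t := by
      intro t ht
      simp only [hFdef]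
      rw [hw t, mul_comm βq (Real.log t), mul_comm βp (Real.log t),
        ← Real.rpow_def_of_pos ht, ← Real.rpow_def_of_pos ht]
    set x0 := Real.log R0 with hx0def
    set x1 := Real.log R1 with hx1def
    set x := Real.log r with hxdef
    have hx01 : x0 < x1 := Real.log_lt_log hR0 hR01
    have hxl : x0 ≤ x := Real.log_le_log hR0 hr0
    have hxr : x ≤ x1 := Real.log_le_log hrpos hr1
    set c := (x1 - x) / (x1 - x0) with hcdef
    set d := (x - x0) / (x1 - x0) with hddef
    have hc : 0 ≤ c := div_nonneg (by linarith) (by linarith)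
    have hd : 0 ≤ d := div_nonneg (by linarith) (by linarith)
    have hne : x1 - x0 ≠ 0 := ne_of_gt (by linarith)
    have hcd : c + d = 1 := by
      rw [hcdef, hddef, ← add_div, div_eq_one_iff_eq hne]
      ring
    have hcomb : c • x0 + d • x1 = x := by
      simp only [smul_eq_mul]
      rw [hcdef, hddef]
      field_simp
      ring
    have h := hgconc.2 (Set.mem_univ x0) (Set.mem_univ x1) hc hd hcd
    rw [hcomb] at h
    rw [hval R0 hR0, hval R1 hR1pos, hval r hrpos, hwR0, hwR1] at h
    simp only [smul_eq_mul, mul_zero, add_zero] at h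
    have hwr := hw r
    rw [hwr] at h
    linarith
  -- helper: sqrt b ^ (2 e) = b ^ e
  have hsqrtpow : ∀ b e : ℝ, 0 < b → Real.sqrt b ^ (2 * e) = b ^ e := by
    intro b e hb
    rw [Real.sqrt_eq_rpow, ← Real.rpow_mul hb.le]
    congr 1
    ring
  have hrpow2 : ∀ r : ℝ, 0 ≤ r → r ^ ((2:ℝ)) = r ^ (2:ℕ) := by
    intro r hr
    rw [show ((2:ℝ)) = ((2:ℕ):ℝ) by norm_num, Real.rpow_natCast]
  -- GN bounds
  have hQbound : ∀ b, 0 < b → b ≤ a → ∀ u, u ∈ msphere N s b →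
      nlterm N α q u ≤ Cq * gagNorm N s u ^ (2 * q * gq) * a ^ (q * (1 - gq)) := by
    intro b hb hba u hu
    have h := hGNq u hu.1
    rw [hu.2, show 2 * q * (1 - gq) = 2 * (q * (1 - gq)) by ring, hsqrtpow b _ hb] at h
    refine le_trans h (mul_le_mul_of_nonneg_left
      (Real.rpow_le_rpow hb.le hba heq0.le) ?_)
    have := Real.rpow_nonneg (Real.sqrt_nonneg (gagSqR N s u)) (2 * q * gq)
    positivity
  have hPbound : ∀ b, 0 < b → b ≤ a → ∀ u, u ∈ msphere N s b →
      nlterm N α p u ≤ Cp * gagNorm N s u ^ (2 * p * gp) * a ^ (p * (1 - gp)) := by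
    intro b hb hba u hu
    have h := hGNp u hu.1
    rw [hu.2, show 2 * p * (1 - gp) = 2 * (p * (1 - gp)) by ring, hsqrtpow b _ hb] at h
    refine le_trans h (mul_le_mul_of_nonneg_left
      (Real.rpow_le_rpow hb.le hba hep0) ?_)
    have := Real.rpow_nonneg (Real.sqrt_nonneg (gagSqR N s u)) (2 * p * gp)
    positivity
  -- L1: truncated functional nonnegative above R0
  have hIT : ∀ b, 0 < b → b ≤ a → ∀ u, u ∈ msphere N s b → R0 ≤ gagNorm N s u →
      0 ≤ ITfun N s α q p μ τ u := by
    intro b hb hba u hu hru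
    have hr0' : 0 < gagNorm N s u := lt_of_lt_of_le hR0 hru
    have hGnn : 0 ≤ gagSqR N s u := ENNReal.toReal_nonneg
    have hG : gagSqR N s u = gagNorm N s u ^ (2:ℕ) := (Real.sq_sqrt hGnn).symm
    have hQ := hQbound b hb hba u hu
    have hP := hPbound b hb hba u hu
    have hsplitq : gagNorm N s u ^ (2 * q * gq)
        = gagNorm N s u ^ βq * gagNorm N s u ^ (2:ℕ) := by
      rw [show 2 * q * gq = βq + 2 by rw [hβq]; ring, Real.rpow_add hr0',
        hrpow2 _ hr0'.le]
    have hsplitp : gagNorm N s u ^ (2 * p * gp)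
        = gagNorm N s u ^ βp * gagNorm N s u ^ (2:ℕ) := by
      rw [show 2 * p * gp = βp + 2 by rw [hβp]; ring, Real.rpow_add hr0',
        hrpow2 _ hr0'.le]
    have hQ' : nlterm N α q u / (2 * q)
        ≤ A * gagNorm N s u ^ βq * gagNorm N s u ^ (2:ℕ) / 2 := by
      rw [hsplitq] at hQ
      rw [div_le_div_iff₀ (mul_pos two_pos hq0) two_pos]
      calc nlterm N α q u * 2 ≤ (Cq * (gagNorm N s u ^ βq * gagNorm N s u ^ (2:ℕ))
            * a ^ (q * (1 - gq))) * 2 := by linarith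
        _ = A * gagNorm N s u ^ βq * gagNorm N s u ^ (2:ℕ) * (2 * q) := by
            rw [hAdef]; field_simp
    have hP' : nlterm N α p u / (2 * p)
        ≤ B * gagNorm N s u ^ βp * gagNorm N s u ^ (2:ℕ) / 2 := by
      rw [hsplitp] at hP
      rw [div_le_div_iff₀ (mul_pos two_pos hp0) two_pos]
      calc nlterm N α p u * 2 ≤ (Cp * (gagNorm N s u ^ βp * gagNorm N s u ^ (2:ℕ))
            * a ^ (p * (1 - gp))) * 2 := by linarith
        _ = B * gagNorm N s u ^ βp * gagNorm N s u ^ (2:ℕ) * (2 * p) := by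
            rw [hBdef]; field_simp
    have hτmem := hτ01 (gagNorm N s u) hr0'.le
    have hPnn : 0 ≤ nlterm N α p u / (2 * p) :=
      div_nonneg ENNReal.toReal_nonneg (by positivity)
    have hμb : 0 ≤ μ / 2 * b := by positivity
    simp only [ITfun, hu.2, hG]
    rcases le_or_gt (gagNorm N s u) R1 with hcase | hcase
    · have hwm := hwmid (gagNorm N s u) hru hcase
      have hτP : τ (gagNorm N s u) * nlterm N α p u / (2 * p) ≤ nlterm N α p u / (2 * p) := by
        rw [mul_div_assoc]
        exact mul_le_of_le_one_left hPnn hτmem.2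
      have key : A * gagNorm N s u ^ βq * gagNorm N s u ^ (2:ℕ)
          + B * gagNorm N s u ^ βp * gagNorm N s u ^ (2:ℕ) ≤ gagNorm N s u ^ (2:ℕ) := by
        calc A * gagNorm N s u ^ βq * gagNorm N s u ^ (2:ℕ)
              + B * gagNorm N s u ^ βp * gagNorm N s u ^ (2:ℕ)
            = (A * gagNorm N s u ^ βq + B * gagNorm N s u ^ βp) * gagNorm N s u ^ (2:ℕ) := by
              ring
          _ ≤ 1 * gagNorm N s u ^ (2:ℕ) :=
              mul_le_mul_of_nonneg_right hwm (by positivity)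
          _ = gagNorm N s u ^ (2:ℕ) := one_mul _
      linarith [hQ', hP', hτP, key]
    · have hτ0 : τ (gagNorm N s u) = 0 := hτzero _ hcase.le
      have hrq : gagNorm N s u ^ βq ≤ R1 ^ βq :=
        Real.rpow_le_rpow_of_nonpos hR1pos hcase.le hβqneg.le
      have hAR1 : A * R1 ^ βq ≤ 1 := by
        have hw1 := hw R1
        rw [hwR1] at hw1
        have hBpos : 0 ≤ B * R1 ^ βp := by
          have := Real.rpow_nonneg hR1pos.le βp
          positivity
        linarith
      have hAr : A * gagNorm N s u ^ βq ≤ 1 := by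
        calc A * gagNorm N s u ^ βq ≤ A * R1 ^ βq :=
              mul_le_mul_of_nonneg_left hrq hA.le
          _ ≤ 1 := hAR1
      have key : A * gagNorm N s u ^ βq * gagNorm N s u ^ (2:ℕ)
          ≤ gagNorm N s u ^ (2:ℕ) := by
        calc A * gagNorm N s u ^ βq * gagNorm N s u ^ (2:ℕ)
            = (A * gagNorm N s u ^ βq) * gagNorm N s u ^ (2:ℕ) := by ring
          _ ≤ 1 * gagNorm N s u ^ (2:ℕ) := mul_le_mul_of_nonneg_right hAr (by positivity)
          _ = gagNorm N s u ^ (2:ℕ) := one_mul _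
      rw [hτ0, zero_mul, zero_div, sub_zero]
      have h5 : nlterm N α q u / (2 * q) ≤ gagNorm N s u ^ (2:ℕ) / 2 :=
        le_trans hQ' (by linarith [key])
      linarith [h5, hμb]
  -- Ifun = ITfun below R0
  have hIfun_eq : ∀ u : EN N → ℝ, gagNorm N s u ≤ R0 →
      Ifun N s α q p μ u = ITfun N s α q p μ τ u := by
    intro u hu
    have h1 : τ (gagNorm N s u) = 1 := hτone _ ⟨Real.sqrt_nonneg _, hu⟩
    simp only [Ifun, ITfun, h1, one_mul]
  -- L2: existence of negative admissible elements
  have hL2 : ∀ b, 0 < b → b ≤ a → ∃ u, u ∈ msphere N s b ∧ gagNorm N s u < R0 ∧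
      Ifun N s α q p μ u < 0 := by
    intro b hb hba
    have hn := hneg b ⟨hb, hba⟩
    have hex : ∃ x ∈ ITfun N s α q p μ τ '' msphere N s b, x < 0 := by
      by_contra hcon
      push_neg at hcon
      exact absurd (Real.sInf_nonneg hcon) (not_le.2 hn)
    obtain ⟨x, ⟨u, hum, rfl⟩, hx⟩ := hex
    have hr : gagNorm N s u < R0 := by
      by_contra hcon
      push_neg at hcon
      exact absurd (hIT b hb hba u hum hcon) (not_le.2 hx)
    exact ⟨u, hum, hr, by rw [hIfun_eq u hr.le]; exact hx⟩
  -- bounded below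
  have hbdd : ∀ b, 0 < b → b ≤ a →
      BddBelow (Ifun N s α q p μ '' {u | u ∈ msphere N s b ∧ gagNorm N s u < R0}) := by
    intro b hb hba
    refine ⟨-(Cq * R0 ^ (2 * q * gq) * a ^ (q * (1 - gq)) / (2 * q))
      - Cp * R0 ^ (2 * p * gp) * a ^ (p * (1 - gp)) / (2 * p), ?_⟩
    rintro x ⟨u, ⟨hum, hur⟩, rfl⟩
    have hQ := hQbound b hb hba u hum
    have hP := hPbound b hb hba u hum
    have hrq : gagNorm N s u ^ (2 * q * gq) ≤ R0 ^ (2 * q * gq) :=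
      Real.rpow_le_rpow (Real.sqrt_nonneg _) hur.le h2qgq
    have hrp : gagNorm N s u ^ (2 * p * gp) ≤ R0 ^ (2 * p * gp) :=
      Real.rpow_le_rpow (Real.sqrt_nonneg _) hur.le h2pgp
    have haq : (0:ℝ) ≤ a ^ (q * (1 - gq)) := Real.rpow_nonneg ha.le _
    have hap : (0:ℝ) ≤ a ^ (p * (1 - gp)) := Real.rpow_nonneg ha.le _
    have hQ2 : nlterm N α q u ≤ Cq * R0 ^ (2 * q * gq) * a ^ (q * (1 - gq)) := by
      refine le_trans hQ ?_
      apply mul_le_mul_of_nonneg_right _ haq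
      exact mul_le_mul_of_nonneg_left hrq hCq.le
    have hP2 : nlterm N α p u ≤ Cp * R0 ^ (2 * p * gp) * a ^ (p * (1 - gp)) := by
      refine le_trans hP ?_
      apply mul_le_mul_of_nonneg_right _ hap
      exact mul_le_mul_of_nonneg_left hrp hCp.le
    have hGnn : 0 ≤ gagSqR N s u := ENNReal.toReal_nonneg
    have hμb : 0 ≤ μ / 2 * b := by positivity
    simp only [Ifun, hum.2]
    have e1 : nlterm N α q u / (2 * q)
        ≤ Cq * R0 ^ (2 * q * gq) * a ^ (q * (1 - gq)) / (2 * q) := by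
      gcongr
    have e2 : nlterm N α p u / (2 * p)
        ≤ Cp * R0 ^ (2 * p * gp) * a ^ (p * (1 - gp)) / (2 * p) := by
      gcongr
    linarith
  -- m is below any admissible value
  have hmle : ∀ b, 0 < b → b ≤ a → ∀ u, u ∈ msphere N s b → gagNorm N s u < R0 →
      m b ≤ Ifun N s α q p μ u := by
    intro b hb hba u hum hur
    rw [hm b]
    exact csInf_le (hbdd b hb hba) ⟨u, ⟨hum, hur⟩, rfl⟩
  have ha1a : a1 ≤ a := le_trans h12.le h2a
  have ha2 : 0 < a2 := lt_trans ha1 h12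
  have hmneg : ∀ b, 0 < b → b ≤ a → m b < 0 := by
    intro b hb hba
    obtain ⟨u, hum, hur, hIu⟩ := hL2 b hb hba
    exact lt_of_le_of_lt (hmle b hb hba u hum hur) hIu
  -- main claim
  have hC : ∀ u, u ∈ msphere N s a1 → gagNorm N s u < R0 → Ifun N s α q p μ u < 0 →
      m a2 < a2 / a1 * Ifun N s α q p μ u := by
    intro u hum hur hIu
    set ρ := a2 / a1 with hρdef
    have hρ1 : 1 < ρ := (one_lt_div ha1).2 h12
    have hρ0 : 0 < ρ := by linarith
    have hQP : 0 < nlterm N α q u / (2 * q) + nlterm N α p u / (2 * p) := by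
      have h1 : 0 ≤ gagSqR N s u := ENNReal.toReal_nonneg
      have h2 : 0 ≤ μ / 2 * l2sq N u := by rw [hum.2]; positivity
      simp only [Ifun] at hIu
      linarith
    have haN : 0 < α / (N:ℝ) := by positivity
    rcases lt_or_ge (ρ ^ (((N:ℝ) - 2 * s) / (2 * N)) * gagNorm N s u) R0 with hcase | hcase
    · obtain ⟨v, hvm, hvg, hvI⟩ :=
        scale_up N s α q p μ hNr hs0 hα0 hq0 hp0 u a1 hum ρ hρ1.le
      have hva2 : ρ * a1 = a2 := by rw [hρdef]; field_simp
      rw [hva2] at hvm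
      have hvg' : gagNorm N s v < R0 := by rw [hvg]; exact hcase
      have hρa : 1 < ρ ^ (α / (N:ℝ)) :=
        (Real.one_lt_rpow_iff_of_pos hρ0).2 (Or.inl ⟨hρ1, haN⟩)
      have hvI' : Ifun N s α q p μ v < ρ * Ifun N s α q p μ u := by
        have hpos : 0 < ρ * (ρ ^ (α / (N:ℝ)) - 1) *
            (nlterm N α q u / (2 * q) + nlterm N α p u / (2 * p)) := by
          apply mul_pos (mul_pos hρ0 (by linarith)) hQP
        linarith
      exact lt_of_le_of_lt (hmle a2 ha2 h2a v hvm hvg') hvI'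
    · exfalso
      have hr0' : 0 < gagNorm N s u := by
        rcases (Real.sqrt_nonneg (gagSqR N s u)).lt_or_eq with h | h
        · exact h
        · exfalso
          rw [gagNorm, ← h, mul_zero] at hcase
          exact absurd hcase (not_le.2 hR0)
      set κ := ((N:ℝ) - 2 * s) / (2 * N) with hκdef
      have hκ0 : 0 < κ := div_pos hNs (by linarith)
      set σ := (R0 / gagNorm N s u) ^ (1 / κ) with hσdef
      have hRr1 : 1 < R0 / gagNorm N s u := (one_lt_div hr0').2 hur
      have hRr0 : 0 < R0 / gagNorm N s u := by linarith
      have hσ1 : 1 < σ :=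
        (Real.one_lt_rpow_iff_of_pos hRr0).2 (Or.inl ⟨hRr1, by positivity⟩)
      have hσ0 : 0 < σ := by linarith
      have hσκ : σ ^ κ = R0 / gagNorm N s u := by
        rw [hσdef, ← Real.rpow_mul hRr0.le, one_div, inv_mul_cancel₀ hκ0.ne',
          Real.rpow_one]
      have hσρ : σ ≤ ρ := by
        by_contra hcon
        push_neg at hcon
        have h1 : ρ ^ κ < σ ^ κ := Real.rpow_lt_rpow hρ0.le hcon hκ0
        rw [hσκ] at h1
        have h2 : R0 / gagNorm N s u ≤ ρ ^ κ := (div_le_iff₀ hr0').2 hcase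
        linarith
      obtain ⟨v, hvm, hvg, hvI⟩ :=
        scale_up N s α q p μ hNr hs0 hα0 hq0 hp0 u a1 hum σ hσ1.le
      have hvg' : gagNorm N s v = R0 := by
        rw [hvg, ← hκdef, hσκ, div_mul_cancel₀ _ hr0'.ne']
      have hb' : 0 < σ * a1 := by positivity
      have hba' : σ * a1 ≤ a := by
        have h1 : σ * a1 ≤ ρ * a1 := mul_le_mul_of_nonneg_right hσρ ha1.le
        have h2 : ρ * a1 = a2 := by rw [hρdef]; field_simp
        linarith
      have hIv0 := hIT (σ * a1) hb' hba' v hvm (le_of_eq hvg'.symm)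
      have hIveq : Ifun N s α q p μ v = ITfun N s α q p μ τ v :=
        hIfun_eq v (le_of_eq hvg')
      have hσa : 1 ≤ σ ^ (α / (N:ℝ)) :=
        Real.one_le_rpow hσ1.le haN.le
      have hIvneg : Ifun N s α q p μ v < 0 := by
        have h1 : σ * Ifun N s α q p μ u < 0 := mul_neg_of_pos_of_neg hσ0 hIu
        have h2 : 0 ≤ σ * (σ ^ (α / (N:ℝ)) - 1) *
            (nlterm N α q u / (2 * q) + nlterm N α p u / (2 * p)) := by
          apply mul_nonneg (mul_nonneg hσ0.le (by linarith)) hQP.le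
        linarith
      rw [hIveq] at hIvneg
      linarith
  -- conclusion
  have harith : ∀ X : ℝ, a1 / a2 * (a2 / a1 * X) = X := by
    intro X
    field_simp
  constructor
  · rw [hm a1]
    obtain ⟨u₀, hu₀m, hu₀r, _⟩ := hL2 a1 ha1 ha1a
    refine le_csInf ⟨_, Set.mem_image_of_mem _ ⟨hu₀m, hu₀r⟩⟩ ?_
    rintro y ⟨u, ⟨hum, hur⟩, rfl⟩
    rcases lt_or_ge (Ifun N s α q p μ u) 0 with hIu | hIu
    · have h := hC u hum hur hIu
      have h' : a1 / a2 * m a2 < a1 / a2 * (a2 / a1 * Ifun N s α q p μ u) :=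
        mul_lt_mul_of_pos_left h (div_pos ha1 ha2)
      rw [harith] at h'
      exact h'.le
    · have h1 := hmneg a2 ha2 h2a
      have h2 : a1 / a2 * m a2 < 0 := mul_neg_of_pos_of_neg (div_pos ha1 ha2) h1
      linarith
  · rintro ⟨u, hum, hur, hIe⟩
    have hma1 := hmneg a1 ha1 ha1a
    have hIu : Ifun N s α q p μ u < 0 := by rw [hIe]; exact hma1
    have h := hC u hum hur hIu
    have h' : a1 / a2 * m a2 < a1 / a2 * (a2 / a1 * Ifun N s α q p μ u) :=
      mul_lt_mul_of_pos_left h (div_pos ha1 ha2)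
    rw [harith, hIe] at h'
    exact h'
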